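/- Under the linear herding model with no misbehaving ratings, for the average scoring rule A(x) = ∑_{m=1}^M m·x_m the following holds: for any ε > 0 and δ ∈ (0,1), if the number of ratings i satisfies φ_i ≥ (M²(M+1)²/(4ε²))·ln(2M/δ), then |A(β_i) − A(α)| ≤ ε holds with probability at least 1 − δ. -/

import Mathlib

open MeasureTheory Filter

/-- Cumulative weight `∑_{j=1}^i w_j`. -/
noncomputable def Sw (w : ℕ → ℝ) (i : ℕ) : ℝ := ∑ j ∈ Finset.Icc 1 i, w j

/-- Normalized weight `w̃_i = w_i / ∑_{j=1}^i w_j`. -/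
noncomputable def wnorm (w : ℕ → ℝ) (i : ℕ) : ℝ := w i / Sw w i

/-- Historical collective opinion
`β_{i,m} = (∑_{j=1}^i w_j 1{R_j = m}) / (∑_{j=1}^i w_j)`. -/
noncomputable def betaH {Ω : Type*} (w : ℕ → ℝ) (R : ℕ → Ω → ℕ) (i m : ℕ) (ω : Ω) : ℝ :=
  (∑ j ∈ Finset.Icc 1 i, w j * (if R j ω = m then (1 : ℝ) else 0)) / Sw w i

/-- `𝓗_i`: the σ-algebra generated by `R_1, …, R_i` (trivial for `i = 0`). -/
def Hsig {Ω : Type*} (R : ℕ → Ω → ℕ) (i : ℕ) : MeasurableSpace Ω :=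
  ⨆ j ∈ Finset.Icc 1 i, MeasurableSpace.comap (R j) ⊤

/-- `ϕ_j = ∏_{ℓ=1}^j [1 − w̃_{ℓ+1} (1 − γ_ℓ + η_ℓ γ_ℓ)]` (with `ϕ_0 = 1`). -/
noncomputable def varphi (wt γ η : ℕ → ℝ) (j : ℕ) : ℝ :=
  ∏ ℓ ∈ Finset.Icc 1 j, (1 - wt (ℓ + 1) * (1 - γ ℓ + η ℓ * γ ℓ))

/-- Convergence-speed metric `φ_i = 1 / ((ϕ_{i−1}²/2) · ∑_{j=1}^i w̃_j²/ϕ_{j−1}²)`. -/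
noncomputable def phiSpeed (wt γ η : ℕ → ℝ) (i : ℕ) : ℝ :=
  1 / ((varphi wt γ η (i - 1)) ^ 2 / 2 *
    ∑ j ∈ Finset.Icc 1 i, (wt j) ^ 2 / (varphi wt γ η (j - 1)) ^ 2)

/-!
Fix a rating level `m` and write `I_j = 1{R_j = m}`. Put `a_j = 1 − w̃_{j+1}(1 − γ_j + η_j γ_j)` and
let `p_j = γ_j((1 − η_j)β_{j,m} + η_j α_m) + (1 − γ_j)α_m` be the herding probability of `R_{j+1} = m`.
The update `β_{j+1} = β_j + w̃_{j+1}(I_{j+1} − β_j)` rewrites as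
`β_{j+1,m} − α_m = a_j (β_{j,m} − α_m) + w̃_{j+1} (I_{j+1} − p_j)`,
and the last term is a centred Bernoulli increment given `𝓗_j`. Hoeffding's lemma applied
conditionally gives `E exp(t(β_{j+1,m} − α_m)) ≤ exp(t² w̃²_{j+1}/8) E exp(t a_j (β_{j,m} − α_m))`,
so `β_{i,m} − α_m` is sub-Gaussian with variance proxy `V_i/4`, where `V_{j+1} = a_j² V_j + w̃²_{j+1}`.
Unrolling, `V_i = ϕ_{i−1}² ∑_{j ≤ i} w̃_j²/ϕ_{j−1}² = 2/φ_i`, and the Chernoff bound reads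
`P(|β_{i,m} − α_m| ≥ s) ≤ 2 exp(−s² φ_i)`. Since `|A(β_i) − A(α)| ≤ ∑ m |β_{i,m} − α_m|`,
a union bound over `m` with `s = 2ε/(M(M+1))` finishes the proof.
-/

open ProbabilityTheory Real

lemma bernoulli_mgf_le {p : ℝ} (hp0 : 0 ≤ p) (hp1 : p ≤ 1) (t : ℝ) :
    (1 - p) * exp (-(t * p)) + p * exp (t * (1 - p)) ≤ exp (t ^ 2 / 8) := by
  let ν : Measure ℝ := bernoulliMeasure (1 - p) (-p) ⟨p, hp0, hp1⟩
  have hIcc : ∀ᵐ x ∂ν, x ∈ Set.Icc (-p) (1 - p) := by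
    rw [ae_iff]
    exact bernoulliMeasure_apply_of_notMem_of_notMem _ measurableSet_Icc.compl
      (by simp) (by simp)
  have hmean : ν[id] = 0 := by
    simp only [ν, integral_bernoulliMeasure, id, smul_eq_mul]; ring
  have h := (hasSubgaussianMGF_of_mem_Icc_of_integral_eq_zero aemeasurable_id hIcc hmean).mgf_le t
  simp only [mgf, ν, integral_bernoulliMeasure, id, smul_eq_mul] at h
  norm_num at h
  rw [show t ^ 2 / 8 = 1 / 4 * t ^ 2 / 2 by ring]
  linarith

section CondExp

variable {Ω : Type*} {m m0 : MeasurableSpace Ω} {μ : Measure[m0] Ω}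

lemma integral_mul_eq_integral_mul_of_condExp_ae_eq [IsFiniteMeasure μ] (hm : m ≤ m0)
    {f g p : Ω → ℝ} (hf : StronglyMeasurable[m] f) (hfg : Integrable (fun ω => f ω * g ω) μ)
    (hg : Integrable g μ) (hgp : μ[g | m] =ᵐ[μ] p) :
    ∫ ω, f ω * g ω ∂μ = ∫ ω, f ω * p ω ∂μ := calc
  ∫ ω, f ω * g ω ∂μ = ∫ ω, (μ[f * g | m]) ω ∂μ := (integral_condExp hm).symm
  _ = ∫ ω, f ω * p ω ∂μ := integral_congr_ae <|
    (condExp_mul_of_stronglyMeasurable_left hf hfg hg).trans (hgp.mono fun ω hω => by simp [hω])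

lemma integral_exp_add_mul_sub_condExp_eq [IsProbabilityMeasure μ] (hm : m ≤ m0)
    {Y p I : Ω → ℝ} {C : ℝ} (hY : StronglyMeasurable[m] Y) (hYC : ∀ ω, Y ω ≤ C)
    (hp : StronglyMeasurable[m] p) (hp01 : ∀ ω, p ω ∈ Set.Icc (0 : ℝ) 1)
    (hI : Measurable I) (hI01 : ∀ ω, I ω = 0 ∨ I ω = 1) (hIp : μ[I | m] =ᵐ[μ] p) (t : ℝ) :
    ∫ ω, exp (Y ω + t * (I ω - p ω)) ∂μ
      = ∫ ω, exp (Y ω) * ((1 - p ω) * exp (-(t * p ω)) + p ω * exp (t * (1 - p ω))) ∂μ := by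
  set f : Ω → ℝ := fun ω => exp (Y ω - t * p ω) with hf_def
  have hfm : StronglyMeasurable[m] f :=
    continuous_exp.comp_stronglyMeasurable (hY.sub (hp.const_mul t))
  have hf_int : Integrable f μ := by
    refine .of_bound (hfm.mono hm).aestronglyMeasurable (exp (C + |t|)) (ae_of_all _ fun ω => ?_)
    obtain ⟨h0, h1⟩ := hp01 ω
    rw [Real.norm_eq_abs, abs_exp, exp_le_exp]
    nlinarith [hYC ω, neg_abs_le t, abs_nonneg t]
  have hI_bound : ∀ ω, ‖I ω‖ ≤ 1 := fun ω => by rcases hI01 ω with h | h <;> simp [h]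
  have hp_bound : ∀ ω, ‖p ω‖ ≤ 1 := fun ω => by
    rw [Real.norm_eq_abs, abs_of_nonneg (hp01 ω).1]; exact (hp01 ω).2
  have hfI_int : Integrable (fun ω => f ω * I ω) μ :=
    hf_int.mul_bdd (c := 1) hI.aestronglyMeasurable (ae_of_all _ hI_bound)
  have hfp_int : Integrable (fun ω => f ω * p ω) μ :=
    hf_int.mul_bdd (c := 1) (hp.mono hm).aestronglyMeasurable (ae_of_all _ hp_bound)
  -- `exp (t * I) = 1 + (exp t - 1) * I` because `I` is `{0, 1}`-valued.
  have hsplit : ∀ ω, exp (Y ω + t * (I ω - p ω)) = f ω + (exp t - 1) * (f ω * I ω) := fun ω => by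
    rcases hI01 ω with h | h
    · simp [h, hf_def, sub_eq_add_neg]
    · rw [h, hf_def, show Y ω + t * (1 - p ω) = (Y ω - t * p ω) + t by ring, exp_add]
      ring
  simp_rw [hsplit]
  rw [integral_add hf_int (hfI_int.const_mul _), integral_const_mul,
    integral_mul_eq_integral_mul_of_condExp_ae_eq hm hfm hfI_int
      (.of_bound hI.aestronglyMeasurable 1 (ae_of_all _ hI_bound)) hIp,
    ← integral_const_mul, ← integral_add hf_int (hfp_int.const_mul _)]
  refine integral_congr_ae (ae_of_all _ fun ω => ?_)
  simp only [hf_def, sub_eq_add_neg, exp_add, mul_add, mul_neg, mul_one]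
  ring

/-- Hoeffding's lemma, conditionally on `m`. -/
lemma integral_exp_add_mul_sub_condExp_le [IsProbabilityMeasure μ] (hm : m ≤ m0)
    {Y p I : Ω → ℝ} {C : ℝ} (hY : StronglyMeasurable[m] Y) (hYC : ∀ ω, Y ω ≤ C)
    (hp : StronglyMeasurable[m] p) (hp01 : ∀ ω, p ω ∈ Set.Icc (0 : ℝ) 1)
    (hI : Measurable I) (hI01 : ∀ ω, I ω = 0 ∨ I ω = 1) (hIp : μ[I | m] =ᵐ[μ] p) (t : ℝ) :
    ∫ ω, exp (Y ω + t * (I ω - p ω)) ∂μ ≤ exp (t ^ 2 / 8) * ∫ ω, exp (Y ω) ∂μ := by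
  have hexpY_int : Integrable (fun ω => exp (Y ω)) μ :=
    .of_bound (continuous_exp.comp_stronglyMeasurable (hY.mono hm)).aestronglyMeasurable (exp C)
      (ae_of_all _ fun ω => by simpa using hYC ω)
  rw [integral_exp_add_mul_sub_condExp_eq hm hY hYC hp hp01 hI hI01 hIp,
    mul_comm (exp (t ^ 2 / 8)), ← integral_mul_const]
  refine integral_mono_of_nonneg (ae_of_all _ fun ω => ?_) (hexpY_int.mul_const _)
    (ae_of_all _ fun ω =>
      mul_le_mul_of_nonneg_left (bernoulli_mgf_le (hp01 ω).1 (hp01 ω).2 t) (exp_pos _).le)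
  obtain ⟨h0, h1⟩ := hp01 ω
  have : 0 ≤ 1 - p ω := by linarith
  positivity

end CondExp

lemma ProbabilityTheory.HasSubgaussianMGF.measure_abs_ge_le {Ω : Type*} [MeasurableSpace Ω]
    {μ : Measure Ω} [IsFiniteMeasure μ] {X : Ω → ℝ} {c : NNReal} (h : HasSubgaussianMGF X c μ)
    {ε : ℝ} (hε : 0 ≤ ε) : μ.real {ω | ε ≤ |X ω|} ≤ 2 * exp (-ε ^ 2 / (2 * c)) := calc
  μ.real {ω | ε ≤ |X ω|} ≤ μ.real ({ω | ε ≤ X ω} ∪ {ω | ε ≤ (-X) ω}) :=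
    measureReal_mono fun ω hω => (le_abs (a := ε) (b := X ω)).1 hω
  _ ≤ μ.real {ω | ε ≤ X ω} + μ.real {ω | ε ≤ (-X) ω} := measureReal_union_le _ _
  _ ≤ exp (-ε ^ 2 / (2 * c)) + exp (-ε ^ 2 / (2 * c)) :=
    add_le_add (h.measure_ge_le hε) (h.neg.measure_ge_le hε)
  _ = 2 * exp (-ε ^ 2 / (2 * c)) := (two_mul _).symm

lemma ofReal_one_sub_le_of_measureReal_compl_le {Ω : Type*} [MeasurableSpace Ω]
    {μ : Measure Ω} [IsProbabilityMeasure μ] {s : Set Ω} {δ : ℝ} (h : μ.real sᶜ ≤ δ) :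
    ENNReal.ofReal (1 - δ) ≤ μ s := by
  refine ENNReal.ofReal_le_of_le_toReal ?_
  have := measureReal_union_le (μ := μ) s sᶜ
  rw [Set.union_compl_self, probReal_univ] at this
  rw [← measureReal_def]
  linarith

lemma sum_Icc_natCast (M : ℕ) : ∑ m ∈ Finset.Icc 1 M, (m : ℝ) = M * (M + 1) / 2 := by
  induction M with
  | zero => simp
  | succ M ih =>
    rw [Finset.sum_Icc_succ_top (Nat.le_add_left 1 M), ih]
    push_cast; ring

lemma compl_setOf_abs_sum_mul_sub_le_subset {Ω : Type*} {M : ℕ} (hM : 1 ≤ M)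
    (x : ℕ → Ω → ℝ) (y : ℕ → ℝ) {ε : ℝ} :
    {ω | |∑ m ∈ Finset.Icc 1 M, (m : ℝ) * x m ω - ∑ m ∈ Finset.Icc 1 M, (m : ℝ) * y m| ≤ ε}ᶜ
      ⊆ ⋃ m ∈ Finset.Icc 1 M, {ω | 2 * ε / (M * (M + 1)) ≤ |x m ω - y m|} := by
  intro ω hω
  by_contra hnot
  simp only [Set.mem_iUnion, Set.mem_ofPred_eq, not_exists, not_le] at hnot
  refine hω ?_
  have hM' : (0 : ℝ) < M * (M + 1) := by positivity
  calc |∑ m ∈ Finset.Icc 1 M, (m : ℝ) * x m ω - ∑ m ∈ Finset.Icc 1 M, (m : ℝ) * y m|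
      = |∑ m ∈ Finset.Icc 1 M, (m : ℝ) * (x m ω - y m)| := by
        simp only [mul_sub, Finset.sum_sub_distrib]
    _ ≤ ∑ m ∈ Finset.Icc 1 M, (m : ℝ) * (2 * ε / (M * (M + 1))) := by
        refine (Finset.abs_sum_le_sum_abs _ _).trans (Finset.sum_le_sum fun m hm => ?_)
        rw [abs_mul, Nat.abs_cast]
        exact mul_le_mul_of_nonneg_left (hnot m hm).le m.cast_nonneg
    _ = ε := by
        rw [← Finset.sum_mul, sum_Icc_natCast]
        field_simp

lemma two_mul_exp_neg_sq_mul_le_div {M ε δ φ : ℝ} (hM : 0 < M) (hε : 0 < ε) (hδ : 0 < δ)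
    (hφ : M ^ 2 * (M + 1) ^ 2 / (4 * ε ^ 2) * log (2 * M / δ) ≤ φ) :
    2 * exp (-((2 * ε / (M * (M + 1))) ^ 2 * φ)) ≤ δ / M := calc
  _ ≤ 2 * exp (-log (2 * M / δ)) := by
    gcongr
    calc log (2 * M / δ)
        = (2 * ε / (M * (M + 1))) ^ 2 * (M ^ 2 * (M + 1) ^ 2 / (4 * ε ^ 2) * log (2 * M / δ)) := by
          field_simp; ring
      _ ≤ (2 * ε / (M * (M + 1))) ^ 2 * φ := by gcongr
  _ = δ / M := by
    rw [exp_neg, exp_log (by positivity)]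
    field_simp

section WeightedAverage

variable {Ω : Type*} (R : ℕ → Ω → ℕ)

lemma Sw_pos {w : ℕ → ℝ} (hw : ∀ j, 0 ≤ w j) (hw1 : 0 < w 1) {j : ℕ} (hj : 1 ≤ j) :
    0 < Sw w j :=
  hw1.trans_le <| Finset.single_le_sum (fun l _ => hw l) (Finset.mem_Icc.2 ⟨le_rfl, hj⟩)

lemma Sw_succ (w : ℕ → ℝ) (j : ℕ) : Sw w (j + 1) = Sw w j + w (j + 1) :=
  Finset.sum_Icc_succ_top (Nat.le_add_left 1 j) w

lemma wnorm_one {w : ℕ → ℝ} (hw1 : 0 < w 1) : wnorm w 1 = 1 := by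
  simp [wnorm, Sw, hw1.ne']

lemma betaH_one {w : ℕ → ℝ} (hw1 : 0 < w 1) (m : ℕ) (ω : Ω) :
    betaH w R 1 m ω = if R 1 ω = m then 1 else 0 := by
  simp only [betaH, Sw, Finset.Icc_self, Finset.sum_singleton]
  split_ifs <;> simp [hw1.ne']

lemma betaH_succ {w : ℕ → ℝ} (hw : ∀ j, 0 ≤ w j) (hw1 : 0 < w 1) {j : ℕ} (hj : 1 ≤ j)
    (m : ℕ) (ω : Ω) :
    betaH w R (j + 1) m ω = betaH w R j m ω
      + wnorm w (j + 1) * ((if R (j + 1) ω = m then 1 else 0) - betaH w R j m ω) := by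
  have h0 := (Sw_pos hw hw1 hj).ne'
  have h1 := (Sw_pos hw hw1 (Nat.le_add_left 1 j)).ne'
  simp only [betaH, wnorm, Finset.sum_Icc_succ_top (Nat.le_add_left 1 j)]
  rw [Sw_succ] at h1 ⊢
  field_simp
  ring

lemma betaH_mem_Icc {w : ℕ → ℝ} (hw : ∀ j, 0 ≤ w j) (hw1 : 0 < w 1) {j : ℕ} (hj : 1 ≤ j)
    (m : ℕ) (ω : Ω) : betaH w R j m ω ∈ Set.Icc (0 : ℝ) 1 := by
  have hterm : ∀ l ∈ Finset.Icc 1 j,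
      w l * (if R l ω = m then (1 : ℝ) else 0) ∈ Set.Icc 0 (w l) := fun l _ => by
    split_ifs <;> simp [hw l]
  exact ⟨div_nonneg (Finset.sum_nonneg fun l hl => (hterm l hl).1) (Sw_pos hw hw1 hj).le,
    div_le_one_of_le₀ (Finset.sum_le_sum fun l hl => (hterm l hl).2) (Sw_pos hw hw1 hj).le⟩

lemma mul_betaH_sub_le_abs {w : ℕ → ℝ} (hw : ∀ j, 0 ≤ w j) (hw1 : 0 < w 1) {a : ℝ}
    (ha : a ∈ Set.Icc (0 : ℝ) 1) {j : ℕ} (hj : 1 ≤ j) (c : ℝ) (m : ℕ) (ω : Ω) :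
    c * (betaH w R j m ω - a) ≤ |c| := by
  obtain ⟨hβ0, hβ1⟩ := betaH_mem_Icc R hw hw1 hj m ω
  refine (le_abs_self _).trans ?_
  rw [abs_mul]
  exact mul_le_of_le_one_right (abs_nonneg c)
    (abs_sub_le_iff.2 ⟨by linarith [ha.1], by linarith [ha.2]⟩)

lemma Hsig_le [MeasurableSpace Ω] (hR : ∀ l, Measurable (R l)) (j : ℕ) :
    Hsig R j ≤ ‹MeasurableSpace Ω› :=
  iSup₂_le fun l _ => (hR l).comap_le

lemma measurable_Hsig {j l : ℕ} (hl : l ∈ Finset.Icc 1 j) : Measurable[Hsig R j] (R l) :=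
  Measurable.of_comap_le
    (le_iSup₂ (f := fun l (_ : l ∈ Finset.Icc 1 j) => MeasurableSpace.comap (R l) ⊤) l hl)

lemma stronglyMeasurable_betaH (w : ℕ → ℝ) (j m : ℕ) :
    StronglyMeasurable[Hsig R j] (betaH w R j m) := by
  refine Measurable.stronglyMeasurable ((Finset.measurable_sum _ fun l hl => ?_).div_const _)
  exact ((measurable_from_top (f := fun n : ℕ => if n = m then (1 : ℝ) else 0)).comp
    (measurable_Hsig R hl)).const_mul _

end WeightedAverage

/-- The `V_j` above, defined by recursion rather than through `varphi` so that no division by a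
possibly vanishing `ϕ_j` occurs. -/
noncomputable def varProxy (wt γ η : ℕ → ℝ) : ℕ → ℝ
  | 0 => 0
  | j + 1 => (1 - wt (j + 1) * (1 - γ j + η j * γ j)) ^ 2 * varProxy wt γ η j + wt (j + 1) ^ 2

section VarProxy

variable (wt γ η : ℕ → ℝ)

lemma varProxy_nonneg (j : ℕ) : 0 ≤ varProxy wt γ η j := by
  induction j with
  | zero => exact le_rfl
  | succ j ih => rw [varProxy]; positivity

lemma varphi_succ (j : ℕ) :
    varphi wt γ η (j + 1)
      = varphi wt γ η j * (1 - wt (j + 1 + 1) * (1 - γ (j + 1) + η (j + 1) * γ (j + 1))) :=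
  Finset.prod_Icc_succ_top (Nat.le_add_left 1 j) _

lemma varProxy_succ_eq_varphi_sq_mul (j : ℕ) (h : varphi wt γ η j ≠ 0) :
    varProxy wt γ η (j + 1)
      = varphi wt γ η j ^ 2 * ∑ l ∈ Finset.Icc 1 (j + 1), wt l ^ 2 / varphi wt γ η (l - 1) ^ 2 := by
  induction j with
  | zero => simp [varProxy, varphi]
  | succ j ih =>
    rw [varphi_succ] at h ⊢
    rw [varProxy, ih (left_ne_zero_of_mul h),
      Finset.sum_Icc_succ_top (show 1 ≤ j + 1 + 1 by omega), Nat.add_sub_cancel, varphi_succ,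
      mul_add (_ ^ 2), mul_div_cancel₀ _ (pow_ne_zero 2 h)]
    ring

lemma phiSpeed_eq_two_div_varProxy {i : ℕ} (hi : 1 ≤ i) (h : varphi wt γ η (i - 1) ≠ 0) :
    phiSpeed wt γ η i = 2 / varProxy wt γ η i := by
  obtain ⟨j, rfl⟩ := Nat.exists_eq_add_of_le' hi
  rw [phiSpeed, varProxy_succ_eq_varphi_sq_mul wt γ η j h, Nat.add_sub_cancel]
  field_simp

end VarProxy

section LinearHerding

variable {Ω : Type*} [MeasurableSpace Ω]

/-- The linear herding model, as seen by the indicators of one rating level `m`. -/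
structure IsLinearHerdingAt (μ : Measure Ω) (w : ℕ → ℝ) (R : ℕ → Ω → ℕ) (α γ η : ℕ → ℝ)
    (m : ℕ) : Prop where
  first : μ {ω | R 1 ω = m} = ENNReal.ofReal (α m)
  condExp_succ : ∀ j, 1 ≤ j →
    μ[(fun ω => if R (j + 1) ω = m then (1 : ℝ) else 0) | Hsig R j]
      =ᵐ[μ] fun ω => γ j * ((1 - η j) * betaH w R j m ω + η j * α m) + (1 - γ j) * α m

variable {μ : Measure Ω} [IsProbabilityMeasure μ] {w : ℕ → ℝ} {R : ℕ → Ω → ℕ} {α γ η : ℕ → ℝ}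
  {m : ℕ}

lemma measurable_ite_eq_one_zero (hR : ∀ j, Measurable (R j)) (j m : ℕ) :
    Measurable fun ω => if R j ω = m then (1 : ℝ) else 0 :=
  Measurable.ite (hR j (measurableSet_singleton m)) measurable_const measurable_const

lemma IsLinearHerdingAt.integral_exp_mul_betaH_one_sub_le (h : IsLinearHerdingAt μ w R α γ η m)
    (hR : ∀ j, Measurable (R j)) (hw1 : 0 < w 1) (hα : α m ∈ Set.Icc (0 : ℝ) 1) (t : ℝ) :
    ∫ ω, exp (t * (betaH w R 1 m ω - α m)) ∂μ ≤ exp (t ^ 2 / 8) := by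
  have hcond : μ[(fun ω => if R 1 ω = m then (1 : ℝ) else 0) | ⊥] =ᵐ[μ] fun _ => α m := by
    have hind : (fun ω => if R 1 ω = m then (1 : ℝ) else 0) = {ω | R 1 ω = m}.indicator 1 := by
      ext; simp [Set.indicator_apply]
    rw [condExp_bot, hind,
      integral_indicator_one (s := {ω | R 1 ω = m}) (hR 1 (measurableSet_singleton m)),
      measureReal_def, h.first, ENNReal.toReal_ofReal hα.1]
  have h1 := integral_exp_add_mul_sub_condExp_le bot_le (Y := 0) (C := 0)
    stronglyMeasurable_const (fun _ => le_rfl) stronglyMeasurable_const (fun _ => hα)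
    (measurable_ite_eq_one_zero hR 1 m) (fun _ => (ite_eq_or_eq _ _ _).symm) hcond t
  simpa [betaH_one R hw1] using h1

lemma IsLinearHerdingAt.integral_exp_mul_betaH_succ_sub_le (h : IsLinearHerdingAt μ w R α γ η m)
    (hR : ∀ j, Measurable (R j)) (hw : ∀ j, 0 ≤ w j) (hw1 : 0 < w 1)
    (hγ : ∀ j, γ j ∈ Set.Icc (0 : ℝ) 1) (hη : ∀ j, η j ∈ Set.Icc (0 : ℝ) 1)
    (hα : α m ∈ Set.Icc (0 : ℝ) 1) {j : ℕ} (hj : 1 ≤ j) (t : ℝ) :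
    ∫ ω, exp (t * (betaH w R (j + 1) m ω - α m)) ∂μ
      ≤ exp ((t * wnorm w (j + 1)) ^ 2 / 8) * ∫ ω, exp ((t * (1 - wnorm w (j + 1) *
          (1 - γ j + η j * γ j))) * (betaH w R j m ω - α m)) ∂μ := by
  set a := 1 - wnorm w (j + 1) * (1 - γ j + η j * γ j)
  set p := fun ω => γ j * ((1 - η j) * betaH w R j m ω + η j * α m) + (1 - γ j) * α m
  have hrec : ∀ ω, t * (betaH w R (j + 1) m ω - α m) = (t * a) * (betaH w R j m ω - α m)
      + (t * wnorm w (j + 1)) * ((if R (j + 1) ω = m then 1 else 0) - p ω) := fun ω => by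
    rw [betaH_succ R hw hw1 hj]; ring
  have hβm := stronglyMeasurable_betaH R w j m
  have hp01 : ∀ ω, p ω ∈ Set.Icc (0 : ℝ) 1 := fun ω => by
    obtain ⟨hβ0, hβ1⟩ := betaH_mem_Icc R hw hw1 hj m ω
    obtain ⟨hγ0, hγ1⟩ := hγ j
    obtain ⟨hη0, hη1⟩ := hη j
    obtain ⟨hα0, hα1⟩ := hα
    constructor <;> nlinarith [mul_nonneg hγ0 hη0, mul_nonneg hγ0 (sub_nonneg.2 hη1)]
  simp_rw [hrec]
  refine integral_exp_add_mul_sub_condExp_le (Hsig_le R hR j) (C := |t * a|)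
    ((hβm.sub stronglyMeasurable_const).const_mul _) (mul_betaH_sub_le_abs R hw hw1 hα hj _ m)
    ((((hβm.const_mul _).add_const _).const_mul _).add_const _) hp01
    (measurable_ite_eq_one_zero hR (j + 1) m) (fun _ => (ite_eq_or_eq _ _ _).symm)
    (h.condExp_succ j hj) _

theorem IsLinearHerdingAt.integral_exp_mul_betaH_sub_le (h : IsLinearHerdingAt μ w R α γ η m)
    (hR : ∀ j, Measurable (R j)) (hw : ∀ j, 0 ≤ w j) (hw1 : 0 < w 1)
    (hγ : ∀ j, γ j ∈ Set.Icc (0 : ℝ) 1) (hη : ∀ j, η j ∈ Set.Icc (0 : ℝ) 1)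
    (hα : α m ∈ Set.Icc (0 : ℝ) 1) {j : ℕ} (hj : 1 ≤ j) (t : ℝ) :
    ∫ ω, exp (t * (betaH w R j m ω - α m)) ∂μ ≤ exp (t ^ 2 * varProxy (wnorm w) γ η j / 8) := by
  induction j, hj using Nat.le_induction generalizing t with
  | base => simpa [varProxy, wnorm_one hw1] using h.integral_exp_mul_betaH_one_sub_le hR hw1 hα t
  | succ j hj ih =>
    calc _ ≤ _ := h.integral_exp_mul_betaH_succ_sub_le hR hw hw1 hγ hη hα hj t
      _ ≤ exp ((t * wnorm w (j + 1)) ^ 2 / 8) * exp ((t * (1 - wnorm w (j + 1) *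
            (1 - γ j + η j * γ j))) ^ 2 * varProxy (wnorm w) γ η j / 8) :=
          mul_le_mul_of_nonneg_left (ih _) (exp_pos _).le
      _ = exp (t ^ 2 * varProxy (wnorm w) γ η (j + 1) / 8) := by
          rw [← exp_add, varProxy]; ring_nf

theorem IsLinearHerdingAt.measure_abs_betaH_sub_ge_le (h : IsLinearHerdingAt μ w R α γ η m)
    (hR : ∀ j, Measurable (R j)) (hw : ∀ j, 0 ≤ w j) (hw1 : 0 < w 1)
    (hγ : ∀ j, γ j ∈ Set.Icc (0 : ℝ) 1) (hη : ∀ j, η j ∈ Set.Icc (0 : ℝ) 1)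
    (hα : α m ∈ Set.Icc (0 : ℝ) 1) {i : ℕ} (hi : 1 ≤ i) {s : ℝ} (hs : 0 ≤ s) :
    μ.real {ω | s ≤ |betaH w R i m ω - α m|} ≤ 2 * exp (-(s ^ 2 * phiSpeed (wnorm w) γ η i)) := by
  by_cases hϕ : varphi (wnorm w) γ η (i - 1) = 0
  -- Then `phiSpeed` is `1 / 0 = 0` and the bound is trivial.
  · simpa [phiSpeed, hϕ] using measureReal_le_one.trans one_le_two
  have hV : 0 ≤ varProxy (wnorm w) γ η i / 4 := by linarith [varProxy_nonneg (wnorm w) γ η i]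
  have hX : HasSubgaussianMGF (fun ω => betaH w R i m ω - α m) ⟨_, hV⟩ μ := by
    refine ⟨fun t => ?_, fun t => ?_⟩
    · refine .of_bound (((stronglyMeasurable_betaH R w i m).mono (Hsig_le R hR i)).measurable
        |>.sub_const _ |>.const_mul t |>.exp).aestronglyMeasurable (exp |t|)
        (ae_of_all _ fun ω => ?_)
      rw [Real.norm_eq_abs, abs_exp, exp_le_exp]
      exact mul_betaH_sub_le_abs R hw hw1 hα hi t m ω
    · refine (h.integral_exp_mul_betaH_sub_le hR hw hw1 hγ hη hα hi t).trans_eq ?_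
      show _ = exp (varProxy (wnorm w) γ η i / 4 * t ^ 2 / 2)
      ring_nf
  refine (hX.measure_abs_ge_le hs).trans_eq ?_
  show 2 * exp (-s ^ 2 / (2 * (varProxy (wnorm w) γ η i / 4))) = _
  rw [phiSpeed_eq_two_div_varProxy _ _ _ hi hϕ]
  ring_nf

end LinearHerding

theorem stmt_8_general
    {Ω : Type*} [MeasurableSpace Ω] (μ : Measure Ω) [IsProbabilityMeasure μ]
    (M : ℕ) (hM : 1 ≤ M)
    (α : ℕ → ℝ) (hα : ∀ m ∈ Finset.Icc 1 M, α m ∈ Set.Icc (0 : ℝ) 1)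
    (R : ℕ → Ω → ℕ)
    (hRmeas : ∀ i, Measurable (R i))
    (w : ℕ → ℝ) (hw : ∀ j, 0 ≤ w j) (hw1 : 0 < w 1)
    (γ : ℕ → ℝ) (hγ : ∀ i, γ i ∈ Set.Icc (0 : ℝ) 1)
    (η : ℕ → ℝ) (hη : ∀ i, η i ∈ Set.Icc (0 : ℝ) 1)
    -- `P[R_1 = m] = α_m`
    (hR1 : ∀ m ∈ Finset.Icc 1 M, μ {ω | R 1 ω = m} = ENNReal.ofReal (α m))
    -- linear herding model
    (hmodel : ∀ i : ℕ, 1 ≤ i → ∀ m ∈ Finset.Icc 1 M,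
      μ[(fun ω => if R (i + 1) ω = m then (1 : ℝ) else 0) | Hsig R i]
        =ᵐ[μ] fun ω =>
          γ i * ((1 - η i) * betaH w R i m ω + η i * α m) + (1 - γ i) * α m)
    (ε δ : ℝ) (hε : 0 < ε) (hδ0 : 0 < δ)
    (i : ℕ) (hi : 1 ≤ i)
    (hphi : ((M : ℝ) ^ 2 * ((M : ℝ) + 1) ^ 2 / (4 * ε ^ 2)) * Real.log (2 * M / δ)
      ≤ phiSpeed (wnorm w) γ η i) :
    ENNReal.ofReal (1 - δ) ≤
      μ {ω | |(∑ m ∈ Finset.Icc 1 M, (m : ℝ) * betaH w R i m ω)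
              - ∑ m ∈ Finset.Icc 1 M, (m : ℝ) * α m| ≤ ε} := by
  have hMpos : (0 : ℝ) < M := by exact_mod_cast hM
  set s := 2 * ε / (M * (M + 1))
  have htail : ∀ m ∈ Finset.Icc 1 M, μ.real {ω | s ≤ |betaH w R i m ω - α m|} ≤ δ / M :=
    fun m hm => (IsLinearHerdingAt.measure_abs_betaH_sub_ge_le
      ⟨hR1 m hm, fun j hj => hmodel j hj m hm⟩ hRmeas hw hw1 hγ hη (hα m hm) hi
      (by positivity)).trans (two_mul_exp_neg_sq_mul_le_div hMpos hε hδ0 hphi)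
  refine ofReal_one_sub_le_of_measureReal_compl_le ?_
  calc _ ≤ μ.real (⋃ m ∈ Finset.Icc 1 M, {ω | s ≤ |betaH w R i m ω - α m|}) :=
        measureReal_mono (compl_setOf_abs_sum_mul_sub_le_subset hM (betaH w R i) α)
          (measure_ne_top _ _)
    _ ≤ ∑ m ∈ Finset.Icc 1 M, μ.real {ω | s ≤ |betaH w R i m ω - α m|} :=
        measureReal_biUnion_finset_le _ _
    _ ≤ ∑ _m ∈ Finset.Icc 1 M, δ / M := Finset.sum_le_sum htail
    _ = δ := by
        rw [Finset.sum_const, Nat.card_Icc, Nat.add_sub_cancel, nsmul_eq_mul]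
        field_simp

/-- Under the linear herding model with no misbehaving ratings, for the
average scoring rule `A(x) = ∑ m·x_m`: if `φ_i ≥ (M²(M+1)²/(4ε²)) ln(2M/δ)`, then
`|A(β_i) − A(α)| ≤ ε` with probability at least `1 − δ`. -/
theorem stmt_8
    {Ω : Type*} [MeasurableSpace Ω] (μ : Measure Ω) [IsProbabilityMeasure μ]
    (M : ℕ) (hM : 1 ≤ M)
    (α : ℕ → ℝ) (hα : ∀ m ∈ Finset.Icc 1 M, α m ∈ Set.Icc (0 : ℝ) 1)
    (hα1 : ∑ m ∈ Finset.Icc 1 M, α m = 1)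
    (R : ℕ → Ω → ℕ) (hRrange : ∀ i, 1 ≤ i → ∀ ω, R i ω ∈ Finset.Icc 1 M)
    (hRmeas : ∀ i, Measurable (R i))
    (w : ℕ → ℝ) (hw : ∀ j, 0 ≤ w j) (hw1 : 0 < w 1)
    (γ : ℕ → ℝ) (hγ : ∀ i, γ i ∈ Set.Icc (0 : ℝ) 1)
    (hγsup : ∃ g, g < 1 ∧ ∀ i, γ i ≤ g)
    (η : ℕ → ℝ) (hη : ∀ i, η i ∈ Set.Icc (0 : ℝ) 1)
    -- `P[R_1 = m] = α_m`
    (hR1 : ∀ m ∈ Finset.Icc 1 M, μ {ω | R 1 ω = m} = ENNReal.ofReal (α m))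
    -- linear herding model
    (hmodel : ∀ i : ℕ, 1 ≤ i → ∀ m ∈ Finset.Icc 1 M,
      μ[(fun ω => if R (i + 1) ω = m then (1 : ℝ) else 0) | Hsig R i]
        =ᵐ[μ] fun ω =>
          γ i * ((1 - η i) * betaH w R i m ω + η i * α m) + (1 - γ i) * α m)
    -- Condition (2): `∑ w̃_i = ∞` and `∑ w̃_i² < ∞`
    (hdiv : Tendsto (fun n => ∑ i ∈ Finset.Icc 1 n, wnorm w i) atTop atTop)
    (hsq : Summable fun i : ℕ => (wnorm w (i + 1)) ^ 2)
    (ε δ : ℝ) (hε : 0 < ε) (hδ0 : 0 < δ) (hδ1 : δ < 1)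
    (i : ℕ) (hi : 1 ≤ i)
    (hphi : ((M : ℝ) ^ 2 * ((M : ℝ) + 1) ^ 2 / (4 * ε ^ 2)) * Real.log (2 * M / δ)
      ≤ phiSpeed (wnorm w) γ η i) :
    ENNReal.ofReal (1 - δ) ≤
      μ {ω | |(∑ m ∈ Finset.Icc 1 M, (m : ℝ) * betaH w R i m ω)
              - ∑ m ∈ Finset.Icc 1 M, (m : ℝ) * α m| ≤ ε} :=
  stmt_8_general μ M hM α hα R hRmeas w hw hw1 γ hγ η hη hR1 hmodel ε δ hε hδ0 i hi hphi
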